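/- Let G₁, G₂ be bounded holomorphic functions on the unit disc with G_i(0) = 0 and G_i'(0) = 1/2, and suppose sup_{w ∈ 𝔻} σ_max([[1, G₂(w)], [G₁(w), 1]]) = √2. Then G₁ = G₂ = F_{√2}, where F_{√2} is the conformal map of 𝔻 onto Ω_{√2} with F_{√2}(0) = 0, F_{√2}'(0) = 1/2. -/

import Mathlib

open Complex Metric

/-- The largest singular value of a 2×2 complex matrix. -/
noncomputable def sigmaMax (M : Matrix (Fin 2) (Fin 2) ℂ) : ℝ :=
  ‖Matrix.toEuclideanCLM (𝕜 := ℂ) M‖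

/-- The conformal map F_{√2} (α = π/4) of the unit disc onto the lens Ω_{√2}. -/
noncomputable def Fmap (α : ℝ) (w : ℂ) : ℂ :=
  I * (Real.tan α : ℂ) *
    (1 - ((1 + I * w) / (1 - I * w)) ^ ((2 * α / Real.pi : ℝ) : ℂ)) /
    (1 + ((1 + I * w) / (1 - I * w)) ^ ((2 * α / Real.pi : ℝ) : ℂ))

open Filter Topology Set Real
open scoped Matrix ComplexConjugate

/-!
Put `c = (G₁ + G₂) / 2` and `d = (G₁ - G₂) / 2`. For `M = [[1, b], [a, 1]]`, `σ_max(M) ≤ √2`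
says `2 - Mᴴ M ⪰ 0`, i.e. `|a + b̄|² ≤ (1 - |a|²)(1 - |b|²)`; by AM-GM and the parallelogram
identity this averages to `|d|² + |1 ∓ c|² ≤ 2`. So `c` maps the disc into the closed lens, on
which `s ↦ 2s / (1 - s²)` takes values in the closed disc. Schwarz's lemma applied to
`2c / (1 - c²)`, which fixes `0` with derivative `1`, gives `2c = w (1 - c²)`, and `F_{√2}(w)` is
the only root of this equation in the closed disc. Finally
`|d|⁴ ≤ (2 - |1 - c|²)(2 - |1 + c|²) = |1 - c²|² (1 - |w|²) ≤ 4 (1 - |w|²)`, so `d` tends to `0`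
at the boundary and vanishes by the maximum modulus principle.
-/

-- `sSup` of a set of reals that is not bounded above is `0`.
lemma le_sSup_of_sSup_ne_zero {s : Set ℝ} {x : ℝ} (hs : sSup s ≠ 0) (hx : x ∈ s) :
    x ≤ sSup s :=
  le_csSup (not_not.mp (mt Real.sSup_of_not_bddAbove hs)) hx

lemma sum_normSq_mulVec_le (M : Matrix (Fin 2) (Fin 2) ℂ) (v : Fin 2 → ℂ) :
    ∑ i, normSq ((M *ᵥ v) i) ≤ sigmaMax M ^ 2 * ∑ i, normSq (v i) := by
  have h := (Matrix.toEuclideanCLM (𝕜 := ℂ) M).le_opNorm (WithLp.toLp 2 v)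
  rw [Matrix.toEuclideanCLM_toLp] at h
  have h2 := pow_le_pow_left₀ (norm_nonneg _) h 2
  simpa only [mul_pow, EuclideanSpace.norm_sq_eq, normSq_eq_norm_sq, sigmaMax] using h2

lemma normSq_add_add_normSq_le {a b : ℂ} (h : sigmaMax !![1, b; a, 1] ≤ √2) (u v : ℂ) :
    normSq (u + b * v) + normSq (a * u + v) ≤ 2 * (normSq u + normSq v) := by
  have hσ : sigmaMax !![1, b; a, 1] ^ 2 ≤ 2 := by
    calc _ ≤ √2 ^ 2 := pow_le_pow_left₀ (norm_nonneg _) h 2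
      _ = 2 := Real.sq_sqrt zero_le_two
  have := (sum_normSq_mulVec_le !![1, b; a, 1] ![u, v]).trans
    (mul_le_mul_of_nonneg_right hσ (Finset.sum_nonneg fun i _ => normSq_nonneg _))
  simpa [Fin.sum_univ_two, mul_comm] using this

lemma normSq_le_mul_of_forall_two_mul_re_le {p r : ℝ} {t : ℂ}
    (h : ∀ u v : ℂ, 2 * (t * u * conj v).re ≤ p * normSq u + r * normSq v) :
    0 ≤ p ∧ 0 ≤ r ∧ normSq t ≤ p * r := by
  have hp : 0 ≤ p := by simpa using h 1 0
  have hr : 0 ≤ r := by simpa using h 0 1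
  -- `u = x * conj t`, `v = 1` gives a quadratic in the real variable `x` that is nonnegative.
  have hdisc : discrim (p * normSq t) (-2 * normSq t) r ≤ 0 := by
    refine discrim_le_zero fun x => ?_
    have := h (x * conj t) 1
    simp only [map_one, mul_one, normSq_mul, normSq_ofReal, normSq_conj] at this
    rw [← mul_assoc, mul_comm t, mul_assoc, mul_conj, ← ofReal_mul, ofReal_re] at this
    nlinarith
  refine ⟨hp, hr, ?_⟩
  rw [discrim] at hdisc
  nlinarith [normSq_nonneg t, mul_nonneg hp hr]

lemma normSq_add_conj_le_of_sigmaMax_le {a b : ℂ} (h : sigmaMax !![1, b; a, 1] ≤ √2) :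
    normSq a ≤ 1 ∧ normSq b ≤ 1 ∧ normSq (a + conj b) ≤ (1 - normSq a) * (1 - normSq b) := by
  obtain ⟨ha, hb, hab⟩ := normSq_le_mul_of_forall_two_mul_re_le
      (p := 1 - normSq a) (r := 1 - normSq b) (t := a + conj b) fun u v => by
        have := normSq_add_add_normSq_le h u v
        simp only [normSq_apply, mul_re, mul_im, add_re, add_im, conj_re, conj_im] at this ⊢
        linear_combination this
  exact ⟨by linarith, by linarith, hab⟩

lemma normSq_half_sub_add_normSq_one_sub_half_add_le {a b : ℂ} (ha : normSq a ≤ 1)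
    (hb : normSq b ≤ 1) (hab : normSq (a + conj b) ≤ (1 - normSq a) * (1 - normSq b)) :
    normSq ((a - b) / 2) + normSq (1 - (a + b) / 2) ≤ 2 ∧
      normSq ((a - b) / 2) + normSq (1 + (a + b) / 2) ≤ 2 := by
  set X := 1 - (normSq a + normSq b) / 2 with hX_def
  have hX : 0 ≤ X := by linarith
  have hre : (a.re + b.re) ^ 2 ≤ X ^ 2 := by
    have : (a.re + b.re) ^ 2 ≤ normSq (a + conj b) := by
      simp only [normSq_apply, add_re, add_im, conj_re, conj_im]
      nlinarith [sq_nonneg (a.im - b.im)]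
    nlinarith [sq_nonneg (normSq a - normSq b)]
  obtain ⟨hlo, hhi⟩ := abs_le_of_sq_le_sq' hre hX
  simp only [hX_def, normSq_apply] at hlo hhi ⊢
  simp only [sub_re, sub_im, add_re, add_im, div_re, div_im, one_re, one_im, normSq_ofNat,
    re_ofNat, im_ofNat]
  constructor <;> linarith

/-- The closure of `Ω_{√2}`. -/
def closedLens : Set ℂ := {s | normSq (1 - s) ≤ 2 ∧ normSq (1 + s) ≤ 2}

lemma two_sub_normSq_one_sub_mul_two_sub_normSq_one_add (s : ℂ) :
    (2 - normSq (1 - s)) * (2 - normSq (1 + s)) = normSq (1 - s ^ 2) - normSq (2 * s) := by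
  simp only [normSq_apply, sub_re, sub_im, add_re, add_im, mul_re, mul_im, one_re, one_im,
    pow_two, re_ofNat, im_ofNat]
  ring

lemma norm_le_one_of_mem_closedLens {s : ℂ} (hs : s ∈ closedLens) : ‖s‖ ≤ 1 := by
  have h : normSq (1 - s) + normSq (1 + s) = 2 + 2 * normSq s := by
    simp only [normSq_apply, sub_re, sub_im, add_re, add_im, one_re, one_im]
    ring
  rw [← sq_le_one_iff₀ (norm_nonneg s), ← normSq_eq_norm_sq]
  linarith [hs.1, hs.2]

lemma normSq_two_mul_le_of_mem_closedLens {s : ℂ} (hs : s ∈ closedLens) :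
    normSq (2 * s) ≤ normSq (1 - s ^ 2) := by
  have := two_sub_normSq_one_sub_mul_two_sub_normSq_one_add s
  nlinarith [mul_nonneg (sub_nonneg.mpr hs.1) (sub_nonneg.mpr hs.2)]

lemma one_sub_sq_ne_zero_of_mem_closedLens {s : ℂ} (hs : s ∈ closedLens) : 1 - s ^ 2 ≠ 0 := by
  intro h
  have h2 := normSq_two_mul_le_of_mem_closedLens hs
  rw [h, map_zero, normSq_mul, normSq_ofNat] at h2
  have hs0 : s = 0 := normSq_eq_zero.mp (by linarith [normSq_nonneg s])
  simp [hs0] at h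

/-- Inverse of `w ↦ F_{√2}(w)`: it maps `Ω_{√2}` conformally onto the unit disc. -/
noncomputable def lensToDisc (s : ℂ) : ℂ := 2 * s / (1 - s ^ 2)

lemma norm_lensToDisc_le_one {s : ℂ} (hs : s ∈ closedLens) : ‖lensToDisc s‖ ≤ 1 := by
  rw [lensToDisc, norm_div]
  refine div_le_one_of_le₀ ?_ (norm_nonneg _)
  have := normSq_two_mul_le_of_mem_closedLens hs
  rw [normSq_eq_norm_sq, normSq_eq_norm_sq] at this
  exact (pow_le_pow_iff_left₀ (norm_nonneg _) (norm_nonneg _) two_ne_zero).mp this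

lemma differentiableAt_lensToDisc {s : ℂ} (hs : 1 - s ^ 2 ≠ 0) :
    DifferentiableAt ℂ lensToDisc s :=
  ((differentiableAt_id.const_mul 2).div (by fun_prop) hs)

lemma hasDerivAt_lensToDisc_zero : HasDerivAt lensToDisc 2 0 :=
  (((hasDerivAt_id' 0).const_mul 2).div (((hasDerivAt_id' 0).pow 2).const_sub 1)
    (by norm_num)).congr_deriv (by norm_num)

theorem eqOn_deriv_mul_of_mapsTo_closedBall {f : ℂ → ℂ}
    (hf : DifferentiableOn ℂ f (ball 0 1)) (hmaps : MapsTo f (ball 0 1) (closedBall 0 1))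
    (h0 : f 0 = 0) (hderiv : ‖deriv f 0‖ = 1) :
    EqOn f (fun z => deriv f 0 * z) (ball 0 1) := by
  have := Complex.affine_of_mapsTo_ball_of_norm_dslope_eq_div hf (by rwa [h0])
    (mem_ball_self one_pos)
    (by rw [dslope_same, hderiv, div_one])
  intro z hz
  simpa [h0, mul_comm] using this hz

lemma two_mul_eq_mul_one_sub_sq_of_mapsTo_closedLens {c : ℂ → ℂ}
    (hc : DifferentiableOn ℂ c (ball 0 1)) (hlens : MapsTo c (ball 0 1) closedLens)
    (h0 : c 0 = 0) (h1 : HasDerivAt c (1 / 2) 0) :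
    ∀ w ∈ ball (0 : ℂ) 1, 2 * c w = w * (1 - c w ^ 2) := by
  have hne : ∀ w ∈ ball (0 : ℂ) 1, 1 - c w ^ 2 ≠ 0 := fun w hw =>
    one_sub_sq_ne_zero_of_mem_closedLens (hlens hw)
  have hdiff : DifferentiableOn ℂ (lensToDisc ∘ c) (ball 0 1) := fun w hw =>
    ((differentiableAt_lensToDisc (hne w hw)).comp w
      (hc.differentiableAt (isOpen_ball.mem_nhds hw))).differentiableWithinAt
  have hderiv : HasDerivAt (lensToDisc ∘ c) 1 0 := by
    have := (h0 ▸ hasDerivAt_lensToDisc_zero).comp 0 h1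
    rwa [mul_one_div_cancel two_ne_zero] at this
  have hid := eqOn_deriv_mul_of_mapsTo_closedBall hdiff
    (fun w hw => mem_closedBall_zero_iff.mpr (norm_lensToDisc_le_one (hlens hw)))
    (by simp [lensToDisc, h0]) (by simp [hderiv.deriv])
  intro w hw
  have := hid hw
  simp only [Function.comp_apply, lensToDisc, hderiv.deriv, one_mul] at this
  rwa [div_eq_iff (hne w hw)] at this

lemma eq_of_two_mul_eq_mul_one_sub_sq {w s t : ℂ} (hw : ‖w‖ ≤ 1) (hs : ‖s‖ ≤ 1) (ht : ‖t‖ < 1)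
    (hs' : 2 * s = w * (1 - s ^ 2)) (ht' : 2 * t = w * (1 - t ^ 2)) : s = t := by
  have hfac : (s - t) * (2 + w * (s + t)) = 0 := by linear_combination hs' - ht'
  have hlt : ‖w * (s + t)‖ < 2 := by
    calc ‖w * (s + t)‖ ≤ 1 * (‖s‖ + ‖t‖) := by
          rw [norm_mul]; gcongr; exact norm_add_le s t
      _ < 2 := by linarith
  have hne : 2 + w * (s + t) ≠ 0 := by
    intro h
    rw [show w * (s + t) = -2 by linear_combination h] at hlt
    norm_num at hlt
  exact sub_eq_zero.mp ((mul_eq_zero.mp hfac).resolve_right hne)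

lemma normSq_sq_le_of_two_mul_eq_mul_one_sub_sq {w s d : ℂ} (hw : normSq w ≤ 1)
    (h₁ : normSq d + normSq (1 - s) ≤ 2) (h₂ : normSq d + normSq (1 + s) ≤ 2)
    (hs : 2 * s = w * (1 - s ^ 2)) : normSq d ^ 2 ≤ 4 * (1 - normSq w) := by
  have hd := normSq_nonneg d
  have hprod : normSq (1 - s ^ 2) ≤ 4 := by
    rw [show 1 - s ^ 2 = (1 - s) * (1 + s) by ring, normSq_mul]
    nlinarith [normSq_nonneg (1 - s), normSq_nonneg (1 + s)]
  calc normSq d ^ 2 ≤ (2 - normSq (1 - s)) * (2 - normSq (1 + s)) := by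
        rw [sq]; exact mul_le_mul (by linarith) (by linarith) hd (by linarith)
    _ = normSq (1 - s ^ 2) * (1 - normSq w) := by
        rw [two_sub_normSq_one_sub_mul_two_sub_normSq_one_add, hs, normSq_mul]; ring
    _ ≤ 4 * (1 - normSq w) := mul_le_mul_of_nonneg_right hprod (by linarith)

theorem eqOn_zero_of_norm_le_of_tendsto {E : Type*} [NormedAddCommGroup E] [NormedSpace ℂ E]
    {f : ℂ → E} {φ : ℝ → ℝ} {R : ℝ} (hf : DifferentiableOn ℂ f (ball 0 R))
    (hφ : Tendsto φ (𝓝[<] R) (𝓝 0)) (hle : ∀ z ∈ ball (0 : ℂ) R, ‖f z‖ ≤ φ ‖z‖) :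
    EqOn f 0 (ball 0 R) := by
  intro w hw
  rw [mem_ball_zero_iff] at hw
  have hbound : ∀ r ∈ Ioo ‖w‖ R, ‖f w‖ ≤ φ r := by
    rintro r ⟨hwr, hrR⟩
    have hr : r ≠ 0 := ((norm_nonneg w).trans_lt hwr).ne'
    have hsub : closedBall (0 : ℂ) r ⊆ ball 0 R := closedBall_subset_ball hrR
    refine Complex.norm_le_of_forall_mem_frontier_norm_le isBounded_ball
      (hf.diffContOnCl_ball hsub) (fun z hz => ?_) (subset_closure (mem_ball_zero_iff.mpr hwr))
    rw [frontier_ball 0 hr, mem_sphere_zero_iff_norm] at hz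
    simpa [hz] using hle z (hsub (mem_closedBall_zero_iff.mpr hz.le))
  have := ge_of_tendsto hφ (eventually_of_mem (Ioo_mem_nhdsLT hw) hbound)
  simpa using norm_le_zero_iff.mp this

lemma eqOn_zero_of_normSq_add_normSq_one_sub_le {c d : ℂ → ℂ}
    (hd : DifferentiableOn ℂ d (ball 0 1))
    (hcd : ∀ w ∈ ball (0 : ℂ) 1,
      normSq (d w) + normSq (1 - c w) ≤ 2 ∧ normSq (d w) + normSq (1 + c w) ≤ 2)
    (hrel : ∀ w ∈ ball (0 : ℂ) 1, 2 * c w = w * (1 - c w ^ 2)) :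
    EqOn d 0 (ball 0 1) := by
  have h4 : EqOn (fun w => d w ^ 4) 0 (ball 0 1) := by
    refine eqOn_zero_of_norm_le_of_tendsto (φ := fun r => 4 * (1 - r ^ 2)) (hd.pow 4) ?_
      fun z hz => ?_
    · exact ((by fun_prop : Continuous fun r : ℝ => 4 * (1 - r ^ 2)).tendsto' 1 0
        (by norm_num)).mono_left nhdsWithin_le_nhds
    · have hz' : normSq z ≤ 1 := by
        rw [normSq_eq_norm_sq]; exact pow_le_one₀ (norm_nonneg z) (mem_ball_zero_iff.mp hz).le
      have := normSq_sq_le_of_two_mul_eq_mul_one_sub_sq hz' (hcd z hz).1 (hcd z hz).2 (hrel z hz)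
      rw [normSq_eq_norm_sq, normSq_eq_norm_sq, ← pow_mul] at this
      simpa [norm_pow] using this
  exact fun w hw => pow_eq_zero_iff (by norm_num) |>.mp (h4 hw)

lemma re_cpow_inv_two_pos {z : ℂ} (hz : z ∈ slitPlane) : 0 < (z ^ (2⁻¹ : ℂ)).re := by
  rw [cpow_def_of_ne_zero (slitPlane_ne_zero hz), exp_re]
  refine mul_pos (Real.exp_pos _) (Real.cos_pos_of_mem_Ioo ?_)
  have him : (log z * 2⁻¹).im = arg z / 2 := by simp [log_im, div_eq_mul_inv]
  have hlt : arg z < π := arg_lt_pi_iff.mpr ((mem_slitPlane_iff.mp hz).imp le_of_lt id)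
  rw [him]
  constructor <;> linarith [neg_pi_lt_arg z]

lemma one_add_ne_zero_of_re_pos {q : ℂ} (hq : 0 < q.re) : 1 + q ≠ 0 := fun h => by
  simp [eq_neg_of_add_eq_zero_right h] at hq
  linarith

lemma norm_I_mul_one_sub_div_one_add_lt_one {q : ℂ} (hq : 0 < q.re) :
    ‖I * (1 - q) / (1 + q)‖ < 1 := by
  rw [norm_div, norm_mul, norm_I, one_mul,
    div_lt_one (norm_pos_iff.mpr (one_add_ne_zero_of_re_pos hq)),
    ← sq_lt_sq₀ (norm_nonneg _) (norm_nonneg _), ← normSq_eq_norm_sq, ← normSq_eq_norm_sq]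
  simp only [normSq_apply, sub_re, sub_im, add_re, add_im, one_re, one_im]
  nlinarith

lemma two_mul_I_mul_one_sub_div_one_add {q w : ℂ} (hq : 1 + q ≠ 0) (hw : 1 - I * w ≠ 0)
    (hsq : q ^ 2 = (1 + I * w) / (1 - I * w)) :
    2 * (I * (1 - q) / (1 + q)) = w * (1 - (I * (1 - q) / (1 + q)) ^ 2) := by
  rw [eq_div_iff hw] at hsq
  field_simp
  linear_combination (-2 * I) * hsq - w * (1 + q) ^ 2 * I_sq

lemma Fmap_pi_div_four (w : ℂ) :
    Fmap (π / 4) w = I * (1 - ((1 + I * w) / (1 - I * w)) ^ (2⁻¹ : ℂ)) /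
      (1 + ((1 + I * w) / (1 - I * w)) ^ (2⁻¹ : ℂ)) := by
  have h : (2 * (π / 4) / π : ℝ) = 2⁻¹ := by field_simp; norm_num
  simp only [Fmap, tan_pi_div_four, h, ofReal_one, mul_one]
  norm_num

lemma one_sub_I_mul_ne_zero {w : ℂ} (hw : ‖w‖ < 1) : 1 - I * w ≠ 0 := by
  intro h
  have : ‖I * w‖ = 1 := by rw [← eq_of_sub_eq_zero h, norm_one]
  rw [norm_mul, norm_I, one_mul] at this
  exact hw.ne this

lemma re_one_add_I_mul_div_one_sub_I_mul_pos {w : ℂ} (hw : ‖w‖ < 1) :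
    0 < ((1 + I * w) / (1 - I * w)).re := by
  have hre : ((1 + I * w) / (1 - I * w)).re = (1 - normSq w) / normSq (1 - I * w) := by
    rw [div_re]
    simp only [normSq_apply, add_re, add_im, sub_re, sub_im, mul_re, mul_im, one_re, one_im,
      I_re, I_im]
    ring
  rw [hre]
  refine div_pos ?_ (normSq_pos.mpr (one_sub_I_mul_ne_zero hw))
  rw [normSq_eq_norm_sq, sub_pos, sq_lt_one_iff₀ (norm_nonneg w)]
  exact hw

lemma norm_Fmap_pi_div_four_lt_one {w : ℂ} (hw : ‖w‖ < 1) : ‖Fmap (π / 4) w‖ < 1 := by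
  rw [Fmap_pi_div_four]
  exact norm_I_mul_one_sub_div_one_add_lt_one <| re_cpow_inv_two_pos <|
    mem_slitPlane_iff.mpr (.inl (re_one_add_I_mul_div_one_sub_I_mul_pos hw))

lemma two_mul_Fmap_pi_div_four {w : ℂ} (hw : ‖w‖ < 1) :
    2 * Fmap (π / 4) w = w * (1 - Fmap (π / 4) w ^ 2) := by
  rw [Fmap_pi_div_four]
  have hq := re_cpow_inv_two_pos <|
    mem_slitPlane_iff.mpr (.inl (re_one_add_I_mul_div_one_sub_I_mul_pos hw))
  exact two_mul_I_mul_one_sub_div_one_add (one_add_ne_zero_of_re_pos hq)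
    (one_sub_I_mul_ne_zero hw) (cpow_ofNat_inv_pow _ 2)

theorem uniqueness_of_optimal_pair_general (G₁ G₂ : ℂ → ℂ)
    (hd₁ : DifferentiableOn ℂ G₁ (ball (0 : ℂ) 1))
    (hd₂ : DifferentiableOn ℂ G₂ (ball (0 : ℂ) 1))
    (h01 : G₁ 0 = 0) (h02 : G₂ 0 = 0)
    (h11 : deriv G₁ 0 = 1 / 2) (h12 : deriv G₂ 0 = 1 / 2)
    (hsup : sSup ((fun w : ℂ => sigmaMax !![1, G₂ w; G₁ w, 1]) '' ball (0 : ℂ) 1) =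
      Real.sqrt 2) :
    ∀ w ∈ ball (0 : ℂ) 1,
      G₁ w = Fmap (Real.pi / 4) w ∧ G₂ w = Fmap (Real.pi / 4) w := by
  have hσ : ∀ w ∈ ball (0 : ℂ) 1, sigmaMax !![1, G₂ w; G₁ w, 1] ≤ √2 := fun w hw =>
    hsup ▸ le_sSup_of_sSup_ne_zero (by rw [hsup]; positivity) (mem_image_of_mem _ hw)
  set c := fun w => (G₁ w + G₂ w) / 2
  set d := fun w => (G₁ w - G₂ w) / 2
  have hcd : ∀ w ∈ ball (0 : ℂ) 1,
      normSq (d w) + normSq (1 - c w) ≤ 2 ∧ normSq (d w) + normSq (1 + c w) ≤ 2 := fun w hw =>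
    let ⟨ha, hb, hab⟩ := normSq_add_conj_le_of_sigmaMax_le (hσ w hw)
    normSq_half_sub_add_normSq_one_sub_half_add_le ha hb hab
  have hlens : MapsTo c (ball 0 1) closedLens := fun w hw =>
    ⟨by linarith [(hcd w hw).1, normSq_nonneg (d w)],
      by linarith [(hcd w hw).2, normSq_nonneg (d w)]⟩
  have hc' : HasDerivAt c (1 / 2) 0 := by
    have h₁ := (hd₁.differentiableAt (ball_mem_nhds 0 one_pos)).hasDerivAt
    have h₂ := (hd₂.differentiableAt (ball_mem_nhds 0 one_pos)).hasDerivAt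
    exact ((h₁.add h₂).div_const 2).congr_deriv (by rw [h11, h12]; norm_num)
  have hrel : ∀ w ∈ ball (0 : ℂ) 1, 2 * c w = w * (1 - c w ^ 2) :=
    two_mul_eq_mul_one_sub_sq_of_mapsTo_closedLens ((hd₁.add hd₂).div_const 2) hlens
      (by simp [c, h01, h02]) hc'
  have hc : ∀ w ∈ ball (0 : ℂ) 1, c w = Fmap (π / 4) w := fun w hw =>
    have hw' := mem_ball_zero_iff.mp hw
    eq_of_two_mul_eq_mul_one_sub_sq hw'.le (norm_le_one_of_mem_closedLens (hlens hw))
      (norm_Fmap_pi_div_four_lt_one hw') (hrel w hw) (two_mul_Fmap_pi_div_four hw')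
  have hd0 : EqOn d 0 (ball 0 1) :=
    eqOn_zero_of_normSq_add_normSq_one_sub_le ((hd₁.sub hd₂).div_const 2) hcd hrel
  intro w hw
  have hcw := hc w hw
  have hdw := hd0 hw
  simp only [c, d, Pi.zero_apply] at hcw hdw
  constructor
  · linear_combination hcw + hdw
  · linear_combination hcw - hdw

theorem uniqueness_of_optimal_pair (G₁ G₂ : ℂ → ℂ)
    (hd₁ : DifferentiableOn ℂ G₁ (ball (0 : ℂ) 1))
    (hd₂ : DifferentiableOn ℂ G₂ (ball (0 : ℂ) 1))
    (hbdd₁ : ∃ C : ℝ, ∀ w ∈ ball (0 : ℂ) 1, ‖G₁ w‖ ≤ C)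
    (hbdd₂ : ∃ C : ℝ, ∀ w ∈ ball (0 : ℂ) 1, ‖G₂ w‖ ≤ C)
    (h01 : G₁ 0 = 0) (h02 : G₂ 0 = 0)
    (h11 : deriv G₁ 0 = 1 / 2) (h12 : deriv G₂ 0 = 1 / 2)
    (hsup : sSup ((fun w : ℂ => sigmaMax !![1, G₂ w; G₁ w, 1]) '' ball (0 : ℂ) 1) =
      Real.sqrt 2) :
    ∀ w ∈ ball (0 : ℂ) 1,
      G₁ w = Fmap (Real.pi / 4) w ∧ G₂ w = Fmap (Real.pi / 4) w :=
  uniqueness_of_optimal_pair_general G₁ G₂ hd₁ hd₂ h01 h02 h11 h12 hsup
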